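/- For $0<b<1$, $\alpha>0$, $t>0$ and $\mathrm{v}(x)=\frac{t}{1-x^2}-\alpha\ln(1-x^2)$, one has $\int_{-b}^{b}\frac{\mathrm{v}(x)}{\sqrt{b^2-x^2}}\,dx = \frac{\pi t}{\sqrt{1-b^2}}+2\pi\alpha\ln\Big(\frac{2}{1+\sqrt{1-b^2}}\Big)$. -/

import Mathlib

/-!
Substituting `x = b sin θ` turns the integral into `∫_{-π/2}^{π/2} v(b sin θ) dθ`. With
`c = √(1 - b²)` and `r = (1 - c)/(1 + c)` one has
`1 - b² sin² θ = ((1 + c)/2)² |e^{2iθ} + r|²`, so the `t`-part is an integral of the Poisson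
kernel of the unit disc at `-r`, and the logarithmic part is the mean value of the harmonic
function `log |z + r|` over the unit circle, which vanishes since `|r| < 1`.
-/

open Real MeasureTheory Set Metric

theorem Complex.sq_norm_add_ofReal {z : ℂ} (hz : ‖z‖ = 1) (r : ℝ) :
    ‖z + r‖ ^ 2 = 1 + r ^ 2 + 2 * r * z.re := by
  have hz2 : z.re * z.re + z.im * z.im = 1 := by
    rw [← Complex.normSq_apply, Complex.normSq_eq_norm_sq, hz, one_pow]
  rw [Complex.sq_norm, Complex.normSq_apply]
  simp only [Complex.add_re, Complex.add_im, Complex.ofReal_re, Complex.ofReal_im, add_zero]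
  linear_combination hz2

theorem integral_comp_cos_two_mul {E : Type*} [NormedAddCommGroup E] [NormedSpace ℝ E]
    (F : ℝ → E) :
    ∫ θ in (-(π / 2))..(π / 2), F (cos (2 * θ)) = π • circleAverage (fun z ↦ F z.re) 0 1 := by
  have hper : Function.Periodic (fun u ↦ F (cos u)) (2 * π) := cos_periodic.comp F
  have hshift := hper.intervalIntegral_add_eq (-π) 0
  rw [intervalIntegral.integral_comp_mul_left (fun u ↦ F (cos u)) two_ne_zero, circleAverage_def]
  simp only [circleMap_zero, Complex.ofReal_one, one_mul, Complex.exp_ofReal_mul_I_re]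
  rw [show 2 * -(π / 2) = -π by ring, show 2 * (π / 2) = -π + 2 * π by ring, hshift, zero_add,
    smul_smul]
  congr 1
  field_simp

/-- No integrability is needed: the change of variables formula for an injective map holds for
Bochner integrals of arbitrary functions, both sides being `0` when they are not integrable. -/
theorem integral_div_sqrt_sq_sub_sq {b : ℝ} (hb : 0 < b) (g : ℝ → ℝ) :
    ∫ x in (-b)..b, g x / √(b ^ 2 - x ^ 2) = ∫ θ in (-(π / 2))..(π / 2), g (b * sin θ) := by
  have himage : (fun θ ↦ b * sin θ) '' Icc (-(π / 2)) (π / 2) = Icc (-b) b := by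
    rw [show (fun θ ↦ b * sin θ) = (b * ·) ∘ sin from rfl, image_comp, bijOn_sin.image_eq,
      image_mul_left_Icc hb.le (by norm_num)]
    simp
  have hderiv : ∀ θ ∈ Icc (-(π / 2)) (π / 2),
      HasDerivWithinAt (fun θ ↦ b * sin θ) (b * cos θ) (Icc (-(π / 2)) (π / 2)) θ :=
    fun θ _ ↦ ((hasDerivAt_sin θ).const_mul b).hasDerivWithinAt
  have hinj : InjOn (fun θ ↦ b * sin θ) (Icc (-(π / 2)) (π / 2)) :=
    fun x hx y hy hxy ↦ injOn_sin hx hy (mul_left_cancel₀ hb.ne' hxy)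
  have hjacobian : ∀ θ ∈ Ioo (-(π / 2)) (π / 2),
      |b * cos θ| • (g (b * sin θ) / √(b ^ 2 - (b * sin θ) ^ 2)) = g (b * sin θ) := by
    intro θ hθ
    have hcos : 0 < cos θ := cos_pos_of_mem_Ioo hθ
    have hbcos : 0 < b * cos θ := mul_pos hb hcos
    rw [show b ^ 2 - (b * sin θ) ^ 2 = (b * cos θ) ^ 2 by
        linear_combination (-b ^ 2) * sin_sq_add_cos_sq θ,
      sqrt_sq hbcos.le, abs_of_pos hbcos, smul_eq_mul]
    field_simp
  have hpi : -(π / 2) ≤ π / 2 := by linarith [pi_pos]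
  rw [intervalIntegral.integral_of_le (by linarith), intervalIntegral.integral_of_le hpi,
    integral_Ioc_eq_integral_Ioo, integral_Ioc_eq_integral_Ioo, ← integral_Icc_eq_integral_Ioo,
    ← himage, integral_image_eq_integral_abs_deriv_smul measurableSet_Icc hderiv hinj,
    integral_Icc_eq_integral_Ioo]
  exact setIntegral_congr_fun measurableSet_Ioo hjacobian

theorem integral_comp_one_sub_sq_mul_sin_sq {E : Type*} [NormedAddCommGroup E] [NormedSpace ℝ E]
    {b c r : ℝ} (hbc : b ^ 2 + c ^ 2 = 1) (hr : r * (1 + c) = 1 - c) (F : ℝ → E) :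
    ∫ θ in (-(π / 2))..(π / 2), F (1 - (b * sin θ) ^ 2)
      = π • circleAverage (fun z ↦ F (((1 + c) / 2) ^ 2 * ‖z + r‖ ^ 2)) 0 1 := by
  have hfactor : ∀ θ, 1 - (b * sin θ) ^ 2
      = ((1 + c) / 2) ^ 2 * (1 + r ^ 2 + 2 * r * cos (2 * θ)) := by
    intro θ
    have hcos : cos (2 * θ) = 1 - 2 * sin θ ^ 2 := by
      rw [cos_two_mul', cos_sq']; ring
    linear_combination (-sin θ ^ 2) * hbc - (1 - c ^ 2) / 2 * hcos
      - ((r * (1 + c) + 1 - c) / 4 + cos (2 * θ) * (1 + c) / 2) * hr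
  simp_rw [hfactor]
  rw [integral_comp_cos_two_mul (fun x ↦ F (((1 + c) / 2) ^ 2 * (1 + r ^ 2 + 2 * r * x)))]
  congr 1
  refine circleAverage_congr_sphere fun z hz ↦ ?_
  rw [Complex.sq_norm_add_ofReal (by simpa using hz)]

theorem circleAverage_inv_sq_norm_add_ofReal {r : ℝ} (hr : |r| < 1) :
    circleAverage (fun z ↦ (‖z + r‖ ^ 2)⁻¹) 0 1 = (1 - r ^ 2)⁻¹ := by
  have hpoisson := InnerProductSpace.HarmonicOnNhd.circleAverage_poissonKernel_smul (c := 0)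
    (w := -r) (R := 1) (InnerProductSpace.harmonicOnNhd_const (1 : ℝ)) (by simpa using hr)
  rw [circleAverage_congr_sphere (f₂ := fun z ↦ (1 - r ^ 2) • (‖z + r‖ ^ 2)⁻¹) ?_,
    circleAverage_fun_smul, smul_eq_mul] at hpoisson
  · exact eq_inv_of_mul_eq_one_right hpoisson
  · intro z hz
    have hz1 : ‖z‖ = 1 := by simpa using hz
    simp [poissonKernel, hz1, div_eq_mul_inv]

theorem circleAverage_log_norm_add_ofReal {r : ℝ} (hr : |r| < 1) :
    circleAverage (fun z ↦ log ‖z + r‖) 0 1 = 0 := by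
  simpa using circleAverage_log_norm_sub_const₀ (a := -r) (by simpa using hr)

section

variable {b c r : ℝ} (hbc : b ^ 2 + c ^ 2 = 1) (hc : 0 < c) (hr : r * (1 + c) = 1 - c)
include hbc hc hr

theorem integral_inv_one_sub_sq_mul_sin_sq :
    ∫ θ in (-(π / 2))..(π / 2), (1 - (b * sin θ) ^ 2)⁻¹ = π / c := by
  have hr1 : |r| < 1 := abs_lt.2 ⟨by nlinarith, by nlinarith⟩
  have hk : ((1 + c) / 2) ^ 2 * (1 - r ^ 2) = c := by
    linear_combination (-(r * (1 + c) + 1 - c) / 4) * hr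
  rw [integral_comp_one_sub_sq_mul_sin_sq hbc hr (·⁻¹)]
  simp_rw [mul_inv]
  rw [show (fun z : ℂ ↦ (((1 + c) / 2) ^ 2)⁻¹ * (‖z + r‖ ^ 2)⁻¹)
      = (((1 + c) / 2) ^ 2)⁻¹ • fun z : ℂ ↦ (‖z + r‖ ^ 2)⁻¹ from rfl,
    circleAverage_smul, circleAverage_inv_sq_norm_add_ofReal hr1, smul_eq_mul, smul_eq_mul,
    ← mul_inv, hk, div_eq_mul_inv]

theorem integral_log_one_sub_sq_mul_sin_sq :
    ∫ θ in (-(π / 2))..(π / 2), log (1 - (b * sin θ) ^ 2) = 2 * π * log ((1 + c) / 2) := by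
  have hr1 : |r| < 1 := abs_lt.2 ⟨by nlinarith, by nlinarith⟩
  rw [integral_comp_one_sub_sq_mul_sin_sq hbc hr log]
  have hsplit : EqOn (fun z : ℂ ↦ log (((1 + c) / 2) ^ 2 * ‖z + r‖ ^ 2))
      (fun z ↦ 2 * log ((1 + c) / 2) + (2 : ℝ) • log ‖z + r‖) (sphere 0 |1|) := by
    intro z hz
    have hz1 : ‖z‖ = 1 := by simpa using hz
    have hne : ‖z + r‖ ≠ 0 := by
      have := norm_sub_le_norm_add z r
      rw [hz1, Complex.norm_real, norm_eq_abs] at this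
      linarith
    simp only [log_mul (x := ((1 + c) / 2) ^ 2) (by positivity) (pow_ne_zero 2 hne), log_pow,
      smul_eq_mul]
    push_cast; ring
  have hint : CircleIntegrable (fun z ↦ log ‖z + r‖) 0 1 := by
    simpa using circleIntegrable_log_norm_sub_const (a := -(r : ℂ)) (c := 0) 1
  rw [circleAverage_congr_sphere hsplit,
    circleAverage_fun_add (f₂ := fun z ↦ (2 : ℝ) • log ‖z + r‖) (circleIntegrable_const _ _ _)
      (hint.const_smul (a := (2 : ℝ))), circleAverage_const,
    circleAverage_fun_smul, circleAverage_log_norm_add_ofReal hr1, smul_zero, add_zero, smul_eq_mul]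
  ring

end

theorem stmt_12_general (b α t : ℝ) (hb : 0 < b) (hb1 : b < 1)
    (v : ℝ → ℝ) (hv : ∀ x : ℝ, v x = t / (1 - x ^ 2) - α * Real.log (1 - x ^ 2)) :
    ∫ x in (-b)..b, v x / Real.sqrt (b ^ 2 - x ^ 2)
      = Real.pi * t / Real.sqrt (1 - b ^ 2)
        + 2 * Real.pi * α * Real.log (2 / (1 + Real.sqrt (1 - b ^ 2))) := by
  set c := √(1 - b ^ 2)
  have hb2 : 0 < 1 - b ^ 2 := by nlinarith
  have hc : 0 < c := sqrt_pos.2 hb2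
  have hbc : b ^ 2 + c ^ 2 = 1 := by rw [sq_sqrt hb2.le]; ring
  have hr : (1 - c) / (1 + c) * (1 + c) = 1 - c := div_mul_cancel₀ _ (by positivity)
  have hpos : ∀ θ, 0 < 1 - (b * sin θ) ^ 2 := fun θ ↦ by nlinarith [sin_sq_le_one θ]
  have hinv : Continuous fun θ ↦ (1 - (b * sin θ) ^ 2)⁻¹ :=
    (by fun_prop : Continuous fun θ ↦ 1 - (b * sin θ) ^ 2).inv₀ fun θ ↦ (hpos θ).ne'
  have hlog : Continuous fun θ ↦ log (1 - (b * sin θ) ^ 2) :=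
    (by fun_prop : Continuous fun θ ↦ 1 - (b * sin θ) ^ 2).log fun θ ↦ (hpos θ).ne'
  simp_rw [integral_div_sqrt_sq_sub_sq hb, hv, div_eq_mul_inv t]
  rw [intervalIntegral.integral_sub ((hinv.intervalIntegrable _ _).const_mul t)
      ((hlog.intervalIntegrable _ _).const_mul α), intervalIntegral.integral_const_mul,
    intervalIntegral.integral_const_mul, integral_inv_one_sub_sq_mul_sin_sq hbc hc hr,
    integral_log_one_sub_sq_mul_sin_sq hbc hc hr, ← inv_div 2, log_inv]
  field_simp
  ring

/-- For `0 < b < 1`, `α, t > 0` and `v(x) = t/(1-x²) - α ln(1-x²)`,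
`∫_{-b}^b v(x)/√(b²-x²) dx = πt/√(1-b²) + 2πα ln(2/(1+√(1-b²)))`. -/
theorem stmt_12 (b α t : ℝ) (hb : 0 < b) (hb1 : b < 1) (hα : 0 < α) (ht : 0 < t)
    (v : ℝ → ℝ) (hv : ∀ x : ℝ, v x = t / (1 - x ^ 2) - α * Real.log (1 - x ^ 2)) :
    ∫ x in (-b)..b, v x / Real.sqrt (b ^ 2 - x ^ 2)
      = Real.pi * t / Real.sqrt (1 - b ^ 2)
        + 2 * Real.pi * α * Real.log (2 / (1 + Real.sqrt (1 - b ^ 2))) :=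
  stmt_12_general b α t hb hb1 v hv
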